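/- arXiv:2605.17027 — 3 statements merged into one kernel-verified Lean document; each statement's English description precedes it below -/
import Mathlib

section
/- Let W ∈ R^{m×m} satisfy W·1 = Wᵀ·1 = 1 and ‖W − (1/m)·1·1ᵀ‖ = η < 1 (spectral norm). Let {x^t} ⊆ R^{m×d} be generated by x^{t+1} = W x^t + v^t from a consensus initialization (all rows of x^0 equal) with arbitrary perturbations satisfying ‖v^t_i‖ ≤ δ for each row i and each t ≥ 0. Let x̄^t := (1/m)·1ᵀ x^t denote the average row. Then for all t ≥ 0: (a) ‖x̄^{t+1} − x̄^t‖ ≤ δ, and (b) ‖x^t − 1·x̄^t‖_F ≤ (√(2m)/(1−η))·δ. -/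
/-!
The deviation `e = x - 1 x̄` from consensus satisfies `e^{t+1} = (W - J) e^t + (v^t - 1 v̄^t)`
with `J = 1 1ᵀ / m`: `W` fixes `1` and preserves averages, and `J` annihilates centred vectors.
Applying the spectral bound column by column, and using that centring does not increase the
Frobenius norm, gives `‖e^{t+1}‖_F ≤ η ‖e^t‖_F + √m δ`; from `e^0 = 0` this yields
`‖e^t‖_F ≤ √m δ / (1 - η)`. The triangle inequality in place of Young's inequality gives `√m`
instead of `√(2m)`. The average itself moves by `v̄^t`, whose norm is at most `δ`.
-/

open Finset Matrix

noncomputable section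

namespace Consensus

variable {ι κ : Type*} [Fintype ι]

section Module
variable {E : Type*} [AddCommGroup E] [Module ℝ E]

def mean (f : ι → E) : E := (Fintype.card ι : ℝ)⁻¹ • ∑ i, f i

def deviation (f : ι → E) : ι → E := fun i => f i - mean f

def mix (W : Matrix κ ι ℝ) (f : ι → E) : κ → E := fun k => ∑ i, W k i • f i

lemma mean_add (f g : ι → E) : mean (f + g) = mean f + mean g := by
  simp only [mean, Pi.add_apply, sum_add_distrib, smul_add]

lemma card_smul_mean [Nonempty ι] (f : ι → E) : (Fintype.card ι : ℝ) • mean f = ∑ i, f i := by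
  rw [mean, smul_smul, mul_inv_cancel₀ (by positivity), one_smul]

lemma mean_const [Nonempty ι] (c : E) : mean (fun _ : ι => c) = c := by
  rw [mean, sum_const, card_univ, ← Nat.cast_smul_eq_nsmul ℝ, smul_smul,
    inv_mul_cancel₀ (by positivity), one_smul]

lemma deviation_const [Nonempty ι] (c : E) : deviation (fun _ : ι => c) = 0 := by
  ext1 i
  simp [deviation, mean_const]

lemma sum_deviation [Nonempty ι] (f : ι → E) : ∑ i, deviation f i = 0 := by
  simp [deviation, sum_sub_distrib, ← Nat.cast_smul_eq_nsmul ℝ, card_smul_mean]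

lemma mix_sub (W V : Matrix κ ι ℝ) (f : ι → E) : mix (W - V) f = mix W f - mix V f := by
  ext1 k
  simp [mix, sub_smul, sum_sub_distrib]

lemma mix_const_deviation [Nonempty ι] (c : ℝ) (f : ι → E) :
    mix (Matrix.of fun (_ : κ) (_ : ι) => c) (deviation f) = 0 := by
  ext1 k
  simp [mix, ← smul_sum, sum_deviation]

lemma mix_deviation {W : Matrix κ ι ℝ} (hrow : W *ᵥ 1 = 1) (f : ι → E) :
    mix W (deviation f) = mix W f - fun _ => mean f := by
  have hrow' : ∀ k, ∑ i, W k i = 1 := fun k => by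
    simpa [mulVec, dotProduct] using congrFun hrow k
  ext1 k
  simp [mix, deviation, smul_sub, sum_sub_distrib, ← sum_smul, hrow']

lemma mean_mix {W : Matrix ι ι ℝ} (hcol : 1 ᵥ* W = 1) (f : ι → E) : mean (mix W f) = mean f := by
  have hcol' : ∀ i, ∑ k, W k i = 1 := fun i => by
    simpa [vecMul, dotProduct] using congrFun hcol i
  simp only [mean, mix]
  rw [sum_comm]
  simp [← sum_smul, hcol']

lemma deviation_mix_add {W : Matrix ι ι ℝ} (hrow : W *ᵥ 1 = 1) (hcol : 1 ᵥ* W = 1)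
    (f g : ι → E) :
    deviation (mix W f + g) = mix W (deviation f) + deviation g := by
  ext1 i
  simp only [deviation, mean_add, mean_mix hcol, mix_deviation hrow, Pi.add_apply, Pi.sub_apply]
  abel

end Module

section Normed

def frobNorm {E : Type*} [Norm E] (f : ι → E) : ℝ := √(∑ i, ‖f i‖ ^ 2)

lemma frobNorm_eq_norm_toLp {E : Type*} [SeminormedAddCommGroup E] (f : ι → E) :
    frobNorm f = ‖WithLp.toLp 2 f‖ := by
  simp [frobNorm, PiLp.norm_eq_of_L2]

lemma frobNorm_add_le {E : Type*} [SeminormedAddCommGroup E] (f g : ι → E) :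
    frobNorm (f + g) ≤ frobNorm f + frobNorm g := by
  simpa only [frobNorm_eq_norm_toLp, WithLp.toLp_add] using norm_add_le _ _

lemma frobNorm_le_of_norm_le {E : Type*} [SeminormedAddGroup E] {f : ι → E} {δ : ℝ} (hδ : 0 ≤ δ)
    (hf : ∀ i, ‖f i‖ ≤ δ) : frobNorm f ≤ √(Fintype.card ι) * δ := by
  rw [frobNorm, ← Real.sqrt_sq hδ, ← Real.sqrt_mul (Nat.cast_nonneg _)]
  gcongr
  calc ∑ i, ‖f i‖ ^ 2 ≤ ∑ _i : ι, δ ^ 2 := by gcongr with i; exact hf i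
  _ = _ := by simp

lemma norm_mean_le {E : Type*} [SeminormedAddCommGroup E] [NormedSpace ℝ E] [Nonempty ι]
    {f : ι → E} {δ : ℝ} (hf : ∀ i, ‖f i‖ ≤ δ) : ‖mean f‖ ≤ δ := by
  have hcard : (0 : ℝ) < Fintype.card ι := by positivity
  rw [mean, norm_smul, norm_inv, RCLike.norm_natCast, inv_mul_le_iff₀ hcard]
  calc ‖∑ i, f i‖ ≤ ∑ i, ‖f i‖ := norm_sum_le _ _
  _ ≤ ∑ _i : ι, δ := sum_le_sum fun i _ => hf i
  _ = Fintype.card ι * δ := by simp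

lemma sum_norm_deviation_sq {E : Type*} [NormedAddCommGroup E] [InnerProductSpace ℝ E]
    [Nonempty ι] (f : ι → E) :
    ∑ i, ‖deviation f i‖ ^ 2 = ∑ i, ‖f i‖ ^ 2 - Fintype.card ι * ‖mean f‖ ^ 2 := by
  have hsum : ∑ i, inner ℝ (f i) (mean f) = Fintype.card ι * ‖mean f‖ ^ 2 := by
    rw [← sum_inner, ← card_smul_mean, real_inner_smul_left, real_inner_self_eq_norm_sq]
  simp only [deviation, norm_sub_sq_real, sum_add_distrib, sum_sub_distrib, ← mul_sum, hsum,
    sum_const, card_univ, nsmul_eq_mul]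
  ring

lemma frobNorm_deviation_le {E : Type*} [NormedAddCommGroup E] [InnerProductSpace ℝ E]
    [Nonempty ι] (f : ι → E) : frobNorm (deviation f) ≤ frobNorm f := by
  rw [frobNorm, frobNorm, sum_norm_deviation_sq]
  gcongr
  exact sub_le_self _ (by positivity)

lemma sum_sq_mulVec_le [DecidableEq ι] [Fintype κ] (A : Matrix κ ι ℝ) (u : ι → ℝ) :
    ∑ k, (A *ᵥ u) k ^ 2 ≤
      ‖LinearMap.toContinuousLinearMap (toEuclideanLin A)‖ ^ 2 * ∑ i, u i ^ 2 := by
  have h := (LinearMap.toContinuousLinearMap (toEuclideanLin A)).le_opNorm (WithLp.toLp 2 u)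
  have h2 := pow_le_pow_left₀ (norm_nonneg _) h 2
  simpa [mul_pow, EuclideanSpace.real_norm_sq_eq] using h2

lemma sum_norm_mix_sq_le {n : Type*} [Fintype n] [DecidableEq ι] [Fintype κ]
    (A : Matrix κ ι ℝ) (f : ι → EuclideanSpace ℝ n) :
    ∑ k, ‖mix A f k‖ ^ 2 ≤
      ‖LinearMap.toContinuousLinearMap (toEuclideanLin A)‖ ^ 2 * ∑ i, ‖f i‖ ^ 2 := by
  have hcoord : ∀ k c, mix A f k c = (A *ᵥ fun i => f i c) k := fun k c => by
    simp [mix, mulVec, dotProduct]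
  simp only [EuclideanSpace.real_norm_sq_eq, hcoord]
  rw [sum_comm, sum_comm (s := univ) (t := univ) (f := fun i c => f i c ^ 2), mul_sum]
  exact sum_le_sum fun c _ => sum_sq_mulVec_le A _

lemma frobNorm_mix_le {n : Type*} [Fintype n] [DecidableEq ι] [Fintype κ]
    (A : Matrix κ ι ℝ) (f : ι → EuclideanSpace ℝ n) :
    frobNorm (mix A f) ≤ ‖LinearMap.toContinuousLinearMap (toEuclideanLin A)‖ * frobNorm f := by
  rw [frobNorm, frobNorm, ← Real.sqrt_sq (norm_nonneg _), ← Real.sqrt_mul (sq_nonneg _)]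
  exact Real.sqrt_le_sqrt (sum_norm_mix_sq_le A f)

end Normed

lemma le_div_one_sub_of_le_mul_add {a : ℕ → ℝ} {η c : ℝ} (hη0 : 0 ≤ η) (hη1 : η < 1)
    (h0 : a 0 ≤ c / (1 - η)) (hstep : ∀ t, a (t + 1) ≤ η * a t + c) (t : ℕ) :
    a t ≤ c / (1 - η) := by
  induction t with
  | zero => exact h0
  | succ t ih =>
    have h1η : 0 < 1 - η := sub_pos.mpr hη1
    calc a (t + 1) ≤ η * (c / (1 - η)) + c := (hstep t).trans (by gcongr)
    _ = c / (1 - η) := by field_simp; ring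

end Consensus

end

open Consensus

/-- Clipped consensus dynamics: if `W` is doubly stochastic with
`‖W − (1/m)·1·1ᵀ‖ = η < 1` (spectral norm), the rows of `x⁰` agree, the
iterates satisfy `x^{t+1} = W x^t + v^t` and every row of `v^t` has norm at
most `δ`, then the average row moves by at most `δ` per step and the
consensus error satisfies `‖x^t − 1·x̄^t‖_F ≤ (√(2m)/(1−η))·δ`. -/
theorem clipped_consensus_bound {m d : ℕ} (hm : 0 < m)
    (W : Matrix (Fin m) (Fin m) ℝ) (η δ : ℝ) (hη1 : η < 1) (hδ : 0 ≤ δ)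
    (hrow : W.mulVec (fun _ => (1 : ℝ)) = fun _ => (1 : ℝ))
    (hcol : Matrix.vecMul (fun _ => (1 : ℝ)) W = fun _ => (1 : ℝ))
    (hspec : ‖LinearMap.toContinuousLinearMap
        (Matrix.toEuclideanLin (W - Matrix.of fun _ _ => (1 : ℝ) / m))‖ = η)
    (x v : ℕ → Fin m → EuclideanSpace ℝ (Fin d))
    (hinit : ∀ i j, x 0 i = x 0 j)
    (hrec : ∀ t i, x (t + 1) i = (∑ j, W i j • x t j) + v t i)
    (hv : ∀ t i, ‖v t i‖ ≤ δ) :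
    ∀ t,
      ‖(m : ℝ)⁻¹ • (∑ i, x (t + 1) i) - (m : ℝ)⁻¹ • (∑ i, x t i)‖ ≤ δ ∧
      Real.sqrt (∑ i, ‖x t i - (m : ℝ)⁻¹ • (∑ j, x t j)‖ ^ 2) ≤
        Real.sqrt (2 * m) / (1 - η) * δ := by
  have : Nonempty (Fin m) := ⟨⟨0, hm⟩⟩
  have h1η : 0 < 1 - η := sub_pos.mpr hη1
  have hx : ∀ t, x (t + 1) = mix W (x t) + v t := fun t => funext (hrec t)
  have hmean (t : ℕ) : mean (x (t + 1)) - mean (x t) = mean (v t) := by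
    rw [hx, mean_add, mean_mix hcol, add_sub_cancel_left]
  have hdev (t : ℕ) : deviation (x (t + 1)) =
      mix (W - Matrix.of fun _ _ => (1 : ℝ) / m) (deviation (x t)) + deviation (v t) := by
    rw [hx, deviation_mix_add hrow hcol, mix_sub, mix_const_deviation, sub_zero]
  have hdev_succ_le (t : ℕ) :
      frobNorm (deviation (x (t + 1))) ≤ η * frobNorm (deviation (x t)) + √m * δ := by
    rw [hdev, ← hspec]
    refine (frobNorm_add_le _ _).trans (add_le_add (frobNorm_mix_le _ _) ?_)
    simpa using (frobNorm_deviation_le _).trans (frobNorm_le_of_norm_le hδ (hv t))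
  have hdev_zero : frobNorm (deviation (x 0)) ≤ √m * δ / (1 - η) := by
    rw [show x 0 = fun _ => x 0 ⟨0, hm⟩ from funext fun i => hinit i _, deviation_const]
    simp only [frobNorm, Pi.zero_apply, norm_zero, zero_pow two_ne_zero, sum_const_zero,
      Real.sqrt_zero]
    positivity
  have hdev_le : ∀ t, frobNorm (deviation (x t)) ≤ √m * δ / (1 - η) :=
    le_div_one_sub_of_le_mul_add (a := fun t => frobNorm (deviation (x t)))
      (hspec ▸ norm_nonneg _) hη1 hdev_zero hdev_succ_le
  intro t
  constructor
  · have h := norm_mean_le (hv t)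
    rw [← hmean] at h
    simpa only [mean, Fintype.card_fin] using h
  · calc _ = frobNorm (deviation (x t)) := by simp [frobNorm, deviation, mean]
    _ ≤ √m * δ / (1 - η) := hdev_le t
    _ ≤ √(2 * m) / (1 - η) * δ := by
      rw [div_mul_eq_mul_div]
      gcongr
      linarith
end

section
/- Let β, δ, ε > 0 with ε < δ²/2, and let u be a random vector in R^d with E[‖T_β^δ(u)‖²] ≤ ε, where T_β^δ is the clipping operator. Let E be the event {T_β^δ(u) = u/β}. Then P(E) ≥ 1 − ε/δ², and E[‖u/β‖² | E] ≤ ε(1 + 2ε/δ²) ≤ ε + 2ε²/δ². -/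
/-!
Off the event `E` the clipped vector has norm exactly `δ`, so the hypothesis splits as
`∫_E ‖u/β‖² + δ² P(Eᶜ) ≤ ε`. This bounds `P(Eᶜ)` by `ε/δ²`, and the conditional second
moment by `ε / (1 - ε/δ²) ≤ ε (1 + 2ε/δ²)`, using `1/(1-x) ≤ 1 + 2x` for `0 ≤ x ≤ 1/2`.
-/

open MeasureTheory

/-- The norm-based clipping operator `T_β^δ`. -/
noncomputable def clipOp {d : ℕ} (β δ : ℝ) (v : EuclideanSpace ℝ (Fin d)) :
    EuclideanSpace ℝ (Fin d) :=
  if ‖v‖ ≤ β * δ then β⁻¹ • v else (δ / ‖v‖) • v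

theorem norm_clipOp_of_ne {d : ℕ} {β δ : ℝ} {v : EuclideanSpace ℝ (Fin d)}
    (h : clipOp β δ v ≠ β⁻¹ • v) : ‖clipOp β δ v‖ = |δ| := by
  unfold clipOp at h ⊢
  split_ifs at h ⊢
  · exact absurd rfl h
  · have hv : v ≠ 0 := by
      rintro rfl
      simp at h
    rw [norm_smul, norm_div, norm_norm, Real.norm_eq_abs,
      div_mul_cancel₀ _ (norm_ne_zero_iff.mpr hv)]

theorem measurable_clipOp {d : ℕ} (β δ : ℝ) :
    Measurable (clipOp (d := d) β δ) :=
  Measurable.ite (measurableSet_le measurable_norm measurable_const) (measurable_const_smul _)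
    ((measurable_const.div measurable_norm).smul measurable_id)

theorem setIntegral_add_mul_measureReal_compl {Ω : Type*} [MeasurableSpace Ω] {μ : Measure Ω}
    {f : Ω → ℝ} {s : Set Ω} {c : ℝ} (hs : MeasurableSet s) (hf : Integrable f μ)
    (hc : ∀ ω ∈ sᶜ, f ω = c) :
    ∫ ω in s, f ω ∂μ + c * μ.real sᶜ = ∫ ω, f ω ∂μ := by
  rw [← integral_add_compl hs hf, setIntegral_congr_fun hs.compl hc, setIntegral_const,
    smul_eq_mul, mul_comm]

theorem inv_one_sub_le_one_add_two_mul {x : ℝ} (hx₀ : 0 ≤ x) (hx : x ≤ 1 / 2) :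
    (1 - x)⁻¹ ≤ 1 + 2 * x := by
  rw [inv_le_iff_one_le_mul₀ (by linarith)]
  nlinarith

theorem one_sub_le_and_div_one_sub_le_of_add_mul_le {a p D ε : ℝ} (ha : 0 ≤ a) (hp : 0 ≤ p)
    (hD : 0 ≤ D) (hεD : ε < D / 2) (h : a + D * p ≤ ε) :
    1 - ε / D ≤ 1 - p ∧ a / (1 - p) ≤ ε * (1 + 2 * ε / D) := by
  have hε : 0 ≤ ε := by nlinarith
  have hD₀ : 0 < D := by linarith
  have hpε : p ≤ ε / D := by rw [le_div_iff₀ hD₀]; linarith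
  have hεD' : ε / D ≤ 1 / 2 := by rw [div_le_iff₀ hD₀]; linarith
  refine ⟨by linarith, ?_⟩
  calc a / (1 - p)
      ≤ ε / (1 - ε / D) := div_le_div₀ hε (by nlinarith) (by linarith) (by linarith)
    _ = ε * (1 - ε / D)⁻¹ := div_eq_mul_inv _ _
    _ ≤ ε * (1 + 2 * (ε / D)) :=
      mul_le_mul_of_nonneg_left (inv_one_sub_le_one_add_two_mul (by positivity) hεD') hε
    _ = ε * (1 + 2 * ε / D) := by ring

theorem clip_inactive_high_probability_general {d : ℕ} {Ω : Type*} [MeasurableSpace Ω]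
    (μ : Measure Ω) [IsProbabilityMeasure μ]
    (β δ ε : ℝ) (hεδ : ε < δ ^ 2 / 2)
    (u : Ω → EuclideanSpace ℝ (Fin d)) (hu : Measurable u)
    (hint : Integrable (fun ω => ‖clipOp β δ (u ω)‖ ^ 2) μ)
    (hbound : ∫ ω, ‖clipOp β δ (u ω)‖ ^ 2 ∂μ ≤ ε) :
    1 - ε / δ ^ 2 ≤ (μ {ω | clipOp β δ (u ω) = β⁻¹ • u ω}).toReal ∧
    (∫ ω in {ω | clipOp β δ (u ω) = β⁻¹ • u ω}, ‖β⁻¹ • u ω‖ ^ 2 ∂μ) /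
        (μ {ω | clipOp β δ (u ω) = β⁻¹ • u ω}).toReal ≤ ε * (1 + 2 * ε / δ ^ 2) := by
  set E := {ω | clipOp β δ (u ω) = β⁻¹ • u ω}
  have hE : MeasurableSet E :=
    measurableSet_eq_fun ((measurable_clipOp β δ).comp hu) ((measurable_const_smul β⁻¹).comp hu)
  have hsplit := setIntegral_add_mul_measureReal_compl (c := δ ^ 2) hE hint fun ω hω => by
    rw [norm_clipOp_of_ne hω, sq_abs]
  have hcond :
      ∫ ω in E, ‖β⁻¹ • u ω‖ ^ 2 ∂μ = ∫ ω in E, ‖clipOp β δ (u ω)‖ ^ 2 ∂μ :=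
    setIntegral_congr_fun hE fun ω hω => by rw [hω]
  have hbounds := one_sub_le_and_div_one_sub_le_of_add_mul_le
    (setIntegral_nonneg hE fun ω _ => sq_nonneg ‖clipOp β δ (u ω)‖) measureReal_nonneg
    (sq_nonneg δ) hεδ (hsplit.trans_le hbound)
  rwa [probReal_compl_eq_one_sub hE, sub_sub_cancel, ← hcond] at hbounds

/-- If `ε < δ²/2` and `E[‖T_β^δ(u)‖²] ≤ ε` for a random vector `u`, then the
event `E = {T_β^δ(u) = u/β}` has probability at least `1 − ε/δ²`, and the
conditional expectation of `‖u/β‖²` given `E` is at most `ε(1 + 2ε/δ²)`. -/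
theorem clip_inactive_high_probability {d : ℕ} {Ω : Type*} [MeasurableSpace Ω]
    (μ : Measure Ω) [IsProbabilityMeasure μ]
    (β δ ε : ℝ) (hβ : 0 < β) (hδ : 0 < δ) (hε : 0 < ε) (hεδ : ε < δ ^ 2 / 2)
    (u : Ω → EuclideanSpace ℝ (Fin d)) (hu : Measurable u)
    (hint : Integrable (fun ω => ‖clipOp β δ (u ω)‖ ^ 2) μ)
    (hbound : ∫ ω, ‖clipOp β δ (u ω)‖ ^ 2 ∂μ ≤ ε) :
    1 - ε / δ ^ 2 ≤ (μ {ω | clipOp β δ (u ω) = β⁻¹ • u ω}).toReal ∧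
    (∫ ω in {ω | clipOp β δ (u ω) = β⁻¹ • u ω}, ‖β⁻¹ • u ω‖ ^ 2 ∂μ) /
        (μ {ω | clipOp β δ (u ω) = β⁻¹ • u ω}).toReal ≤ ε * (1 + 2 * ε / δ ^ 2) :=
  clip_inactive_high_probability_general μ β δ ε hεδ u hu hint hbound
end

section
/- Let f : R^d → R be twice continuously differentiable and satisfy the α-generalized smoothness condition ‖∇²f(x)‖ ≤ L₀ + L₁‖∇f(x)‖^α for some L₀, L₁ > 0 and α ∈ (0,1). Then for any reference point x̄ and all x ∈ R^d, ‖∇f(x)‖ ≤ ( [‖∇f(x̄)‖ + L₀‖x − x̄‖]^{1−α} + (1−α)L₁‖x − x̄‖ )^{1/(1−α)}. -/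
/-!
Along the segment `t ↦ x̄ + t • (x - x̄)` the gradient `F t` satisfies
`‖F' t‖ ≤ a + c * ‖F t‖ ^ α` with `a = L₀ * ‖x - x̄‖` and `c = L₁ * ‖x - x̄‖`.
The function `B t = ((A + a * t) ^ (1 - α) + (1 - α) * c * t) ^ (1 / (1 - α))` is a supersolution
of `y' = a + c * y ^ α`: for `u = B ^ (1 - α)` one has `u' = (1 - α) * (a * (A + a * t) ^ (-α) + c)`
and `(A + a * t) ^ α ≤ B ^ α`. Replacing `A = ‖F 0‖` and `a` by `A + ε` and `a + ε` makes it a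
strict supersolution, so the fencing theorem for norms gives `‖F 1‖ ≤ B 1`; then let `ε → 0`.
-/

open Set Filter Topology

noncomputable def growthBound (α A a c t : ℝ) : ℝ :=
  ((A + a * t) ^ (1 - α) + (1 - α) * c * t) ^ (1 / (1 - α))

section growthBound

variable {α A a c t : ℝ}

theorem growthBound_zero (hα : α < 1) (hA : 0 ≤ A) : growthBound α A a c 0 = A := by
  have hβ : 1 - α ≠ 0 := by linarith
  simp only [growthBound, mul_zero, add_zero]
  rw [← Real.rpow_mul hA, mul_one_div_cancel hβ, Real.rpow_one]

theorem hasDerivAt_growthBound (hα : α < 1) (hc : 0 ≤ c) (ht : 0 ≤ t) (hv : 0 < A + a * t) :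
    HasDerivAt (growthBound α A a c)
      (((A + a * t) ^ (1 - α) + (1 - α) * c * t) ^ (α / (1 - α)) *
        ((A + a * t) ^ (-α) * a + c)) t := by
  have hβ : 0 < 1 - α := by linarith
  have hu : 0 < (A + a * t) ^ (1 - α) + (1 - α) * c * t := by positivity
  have hv' : HasDerivAt (fun s => A + a * s) a t := by
    simpa using ((hasDerivAt_id t).const_mul a).const_add A
  have hu' : HasDerivAt (fun s => (A + a * s) ^ (1 - α) + (1 - α) * c * s)
      (a * (1 - α) * (A + a * t) ^ (1 - α - 1) + (1 - α) * c) t :=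
    (hv'.rpow_const (p := 1 - α) (Or.inl hv.ne')).fun_add
      (by simpa using (hasDerivAt_id t).const_mul ((1 - α) * c))
  refine (hu'.rpow_const (p := 1 / (1 - α)) (Or.inl hu.ne')).congr_deriv ?_
  rw [show 1 / (1 - α) - 1 = α / (1 - α) by field_simp; ring, show 1 - α - 1 = -α by ring]
  field_simp

theorem add_mul_growthBound_rpow_le (hα0 : 0 ≤ α) (hα1 : α < 1) (ha : 0 ≤ a) (hc : 0 ≤ c)
    (ht : 0 ≤ t) (hv : 0 < A + a * t) :
    a + c * growthBound α A a c t ^ α ≤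
      ((A + a * t) ^ (1 - α) + (1 - α) * c * t) ^ (α / (1 - α)) *
        ((A + a * t) ^ (-α) * a + c) := by
  have hβ : 0 < 1 - α := by linarith
  set u := (A + a * t) ^ (1 - α) + (1 - α) * c * t
  have hu : 0 ≤ u := by positivity
  have hpow : growthBound α A a c t ^ α = u ^ (α / (1 - α)) := by
    rw [growthBound, ← Real.rpow_mul hu]
    ring_nf
  have hle : (A + a * t) ^ α ≤ u ^ (α / (1 - α)) := by
    calc (A + a * t) ^ α = ((A + a * t) ^ (1 - α)) ^ (α / (1 - α)) := by
          rw [← Real.rpow_mul hv.le, mul_div_cancel₀ _ hβ.ne']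
      _ ≤ u ^ (α / (1 - α)) := by
          gcongr
          exact le_add_of_nonneg_right (by positivity)
  have hone : 1 ≤ u ^ (α / (1 - α)) * (A + a * t) ^ (-α) := by
    rw [Real.rpow_neg hv.le, ← div_eq_mul_inv, le_div_iff₀ (by positivity), one_mul]
    exact hle
  rw [hpow, mul_add, ← mul_assoc, mul_comm c]
  exact add_le_add_left (le_mul_of_one_le_left ha hone) _

theorem continuous_growthBound_add (hα : α < 1) :
    Continuous fun ε => growthBound α (A + ε) (a + ε) c t := by
  unfold growthBound
  fun_prop (disch := positivity)

end growthBound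

theorem norm_le_growthBound_of_norm_deriv_le {E : Type*} [NormedAddCommGroup E]
    [NormedSpace ℝ E] {F F' : ℝ → E} {α a c T : ℝ} (hα0 : 0 ≤ α) (hα1 : α < 1) (ha : 0 ≤ a)
    (hc : 0 ≤ c) (hT : 0 ≤ T) (hF : ContinuousOn F (Icc 0 T))
    (hF' : ∀ t ∈ Ico 0 T, HasDerivWithinAt F (F' t) (Ici t) t)
    (bound : ∀ t ∈ Ico 0 T, ‖F' t‖ ≤ a + c * ‖F t‖ ^ α) :
    ‖F T‖ ≤ growthBound α ‖F 0‖ a c T := by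
  have hε : ∀ ε > 0, ‖F T‖ ≤ growthBound α (‖F 0‖ + ε) (a + ε) c T := by
    intro ε hε
    have hv : ∀ t ∈ Ici (0 : ℝ), 0 < ‖F 0‖ + ε + (a + ε) * t := fun t ht => by
      have : (0 : ℝ) ≤ t := ht
      positivity
    have hB := fun t ht => hasDerivAt_growthBound hα1 hc ht (hv t ht)
    refine image_norm_le_of_norm_deriv_right_lt_deriv_boundary' hF hF' ?_
      (fun t ht => (hB t ht.1).continuousAt.continuousWithinAt)
      (fun t ht => (hB t ht.1).hasDerivWithinAt) (fun t ht hFt => ?_) (right_mem_Icc.2 hT)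
    · rw [growthBound_zero hα1 (by positivity)]
      linarith
    · calc ‖F' t‖ ≤ a + c * ‖F t‖ ^ α := bound t ht
        _ < a + ε + c * growthBound α (‖F 0‖ + ε) (a + ε) c t ^ α := by rw [hFt]; linarith
        _ ≤ _ := add_mul_growthBound_rpow_le hα0 hα1 (by positivity) hc ht.1 (hv t ht.1)
  have hlim : Tendsto (fun ε => growthBound α (‖F 0‖ + ε) (a + ε) c T) (𝓝[>] 0)
      (𝓝 (growthBound α ‖F 0‖ a c T)) := by
    simpa using ((continuous_growthBound_add hα1).tendsto 0).mono_left nhdsWithin_le_nhds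
  exact ge_of_tendsto hlim (eventually_nhdsWithin_of_forall hε)

theorem norm_le_growthBound_of_norm_fderiv_le {E F : Type*} [NormedAddCommGroup E]
    [NormedSpace ℝ E] [NormedAddCommGroup F] [NormedSpace ℝ F] {G : E → F} {L₀ L₁ α : ℝ}
    (hG : Differentiable ℝ G) (hα0 : 0 ≤ α) (hα1 : α < 1) (hL₀ : 0 ≤ L₀) (hL₁ : 0 ≤ L₁)
    (hH : ∀ y, ‖fderiv ℝ G y‖ ≤ L₀ + L₁ * ‖G y‖ ^ α) (x y : E) :
    ‖G y‖ ≤ growthBound α ‖G x‖ (L₀ * ‖y - x‖) (L₁ * ‖y - x‖) 1 := by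
  have hpath : ∀ t : ℝ, HasDerivAt (fun s : ℝ => G (x + s • (y - x)))
      (fderiv ℝ G (x + t • (y - x)) (y - x)) t := fun t =>
    (hG _).hasFDerivAt.comp_hasDerivAt t
      (by simpa using ((hasDerivAt_id t).smul_const (y - x)).const_add x)
  simpa using norm_le_growthBound_of_norm_deriv_le hα0 hα1 (by positivity) (by positivity)
    zero_le_one (fun t _ => (hpath t).continuousAt.continuousWithinAt)
    (fun t _ => (hpath t).hasDerivWithinAt) fun t _ => by
      calc _ ≤ ‖fderiv ℝ G (x + t • (y - x))‖ * ‖y - x‖ := ContinuousLinearMap.le_opNorm _ _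
        _ ≤ (L₀ + L₁ * ‖G (x + t • (y - x))‖ ^ α) * ‖y - x‖ := by gcongr; exact hH _
        _ = _ := by ring

/-- Gradient growth under `α`-generalized smoothness: if
`‖∇²f(x)‖ ≤ L₀ + L₁‖∇f(x)‖^α` with `α ∈ (0,1)`, then for any reference point
`xbar` and all `x`,
`‖∇f(x)‖ ≤ ([‖∇f(xbar)‖ + L₀‖x−xbar‖]^{1−α} + (1−α)L₁‖x−xbar‖)^{1/(1−α)}`. -/
theorem gradient_growth_generalized_smooth {d : ℕ}
    (f : EuclideanSpace ℝ (Fin d) → ℝ) (hf : ContDiff ℝ 2 f)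
    (L₀ L₁ α : ℝ) (hL₀ : 0 < L₀) (hL₁ : 0 < L₁) (hα0 : 0 < α) (hα1 : α < 1)
    (hH : ∀ x, ‖fderiv ℝ (fun y => gradient f y) x‖ ≤ L₀ + L₁ * ‖gradient f x‖ ^ α) :
    ∀ xbar x : EuclideanSpace ℝ (Fin d),
      ‖gradient f x‖ ≤
        ((‖gradient f xbar‖ + L₀ * ‖x - xbar‖) ^ (1 - α) +
          (1 - α) * L₁ * ‖x - xbar‖) ^ (1 / (1 - α)) := by
  intro xbar x
  have hG : Differentiable ℝ (gradient f) :=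
    ((InnerProductSpace.toDual ℝ _).symm.contDiff.comp
      (hf.fderiv_right (m := 1) (by norm_num))).differentiable one_ne_zero
  simpa [growthBound, mul_assoc] using
    norm_le_growthBound_of_norm_fderiv_le hG hα0.le hα1 hL₀.le hL₁.le hH xbar x
end
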